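/- Let d ≥ 1 be an integer and let ψ₀, ψ₁ : ℝ^d → ℂ be continuous functions that are 2π-periodic in each coordinate, such that {x : ψ₀(x) = 0} = {x : ψ₁(x) = 0} and, for every x with ψ₀(x) ≠ 0, the quotient ψ₁(x)/ψ₀(x) is a strictly positive real number (i.e., ψ₀ and ψ₁ share the same argument). Then for every ε > 0 there exists a continuous, 2π-periodic-in-each-coordinate function φ : ℝ^d → ℝ such that (∫_{[0,2π]^d} |e^{φ(x)} ψ₀(x) − ψ₁(x)|² dx)^{1/2} < ε. -/

import Mathlib

/-!
Off the common zero set `ψ₁ = (‖ψ₁‖ / ‖ψ₀‖) ψ₀`, so `e^φ` should be `‖ψ₁‖ / ‖ψ₀‖`, which is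
neither continuous nor finite at the zeros. Its regularization `(‖ψ₁‖ + δ) / (‖ψ₀‖ + δ)` is positive,
continuous and periodic, so it is `e^φ` for an admissible `φ`. As `δ → 0⁺` the error
`(‖ψ₁‖ + δ) / (‖ψ₀‖ + δ) • ψ₀ - ψ₁` tends to `0` pointwise (trivially on the zero set) and is bounded
by `2‖ψ₁‖ + 1`, so its `L²` norm on the period cell tends to `0` by dominated convergence.
-/

open Filter Topology MeasureTheory

section RegularizedNormRatio

variable {E : Type*} [NormedAddCommGroup E]

noncomputable def regularizedNormRatio (δ : ℝ) (x y : E) : ℝ := (‖y‖ + δ) / (‖x‖ + δ)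

variable {δ : ℝ} {x y : E}

theorem regularizedNormRatio_pos (hδ : 0 < δ) : 0 < regularizedNormRatio δ x y := by
  unfold regularizedNormRatio; positivity

theorem regularizedNormRatio_mul_norm_le (hδ : 0 < δ) :
    regularizedNormRatio δ x y * ‖x‖ ≤ ‖y‖ + δ := by
  unfold regularizedNormRatio
  rw [div_mul_eq_mul_div, div_le_iff₀ (by positivity)]
  exact mul_le_mul_of_nonneg_left (le_add_of_nonneg_right hδ.le) (by positivity)

variable [NormedSpace ℝ E]

theorem norm_regularizedNormRatio_smul_sub_le (hδ : 0 < δ) :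
    ‖regularizedNormRatio δ x y • x - y‖ ≤ 2 * ‖y‖ + δ :=
  calc ‖regularizedNormRatio δ x y • x - y‖
      ≤ regularizedNormRatio δ x y * ‖x‖ + ‖y‖ :=
        (norm_sub_le _ _).trans_eq <| by
          rw [norm_smul, Real.norm_of_nonneg (regularizedNormRatio_pos hδ).le]
    _ ≤ 2 * ‖y‖ + δ := by linarith [regularizedNormRatio_mul_norm_le (x := x) (y := y) hδ]

theorem tendsto_regularizedNormRatio_smul_sub (hxy : SameRay ℝ x y) (hx : x = 0 → y = 0) :
    Tendsto (fun δ => regularizedNormRatio δ x y • x - y) (𝓝 0) (𝓝 0) := by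
  rcases eq_or_ne x 0 with rfl | hx₀
  · simp [hx rfl]
  obtain ⟨r, hr, rfl⟩ := hxy.exists_nonneg_left hx₀
  have hnorm : 0 < ‖x‖ := norm_pos_iff.mpr hx₀
  have hratio : Tendsto (fun δ => regularizedNormRatio δ x (r • x)) (𝓝 0) (𝓝 r) := by
    have hshift (a : ℝ) : Tendsto (fun δ : ℝ => a + δ) (𝓝 0) (𝓝 a) := by
      simpa using tendsto_const_nhds.add (tendsto_id (x := 𝓝 (0 : ℝ)))
    convert (hshift ‖r • x‖).div (hshift ‖x‖) hnorm.ne' using 2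
    · rfl
    · rw [norm_smul, Real.norm_of_nonneg hr, mul_div_cancel_right₀ _ hnorm.ne']
  simpa using (hratio.smul_const x).sub_const (r • x)

end RegularizedNormRatio

section Integral

variable {X E : Type*} [TopologicalSpace X] [NormedAddCommGroup E] {f g : X → E}

theorem Continuous.regularizedNormRatio (hf : Continuous f) (hg : Continuous g) {δ : ℝ}
    (hδ : 0 < δ) : Continuous fun x => regularizedNormRatio δ (f x) (g x) :=
  (hg.norm.add continuous_const).div (hf.norm.add continuous_const) fun _ => by positivity

variable [NormedSpace ℝ E] [T2Space X] [MeasurableSpace X] [OpensMeasurableSpace X] {μ : Measure X}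
  [IsFiniteMeasureOnCompacts μ] {s : Set X}

theorem tendsto_setIntegral_norm_regularizedNormRatio_smul_sub_sq (hs : IsCompact s)
    (hf : Continuous f) (hg : Continuous g) (hfg : ∀ x, SameRay ℝ (f x) (g x))
    (hzero : ∀ x, f x = 0 → g x = 0) :
    Tendsto (fun δ => ∫ x in s, ‖regularizedNormRatio δ (f x) (g x) • f x - g x‖ ^ 2 ∂μ)
      (𝓝[>] (0 : ℝ)) (𝓝 0) := by
  set F : ℝ → X → ℝ := fun δ x => ‖regularizedNormRatio δ (f x) (g x) • f x - g x‖ ^ 2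
  have hmeas : ∀ᶠ δ in 𝓝[>] (0 : ℝ), AEStronglyMeasurable (F δ) (μ.restrict s) :=
    eventually_mem_nhdsWithin.mono fun δ (hδ : 0 < δ) =>
      (((hf.regularizedNormRatio hg hδ).smul hf).sub hg).norm.pow 2 |>.aestronglyMeasurable
  have hdom : ∀ᶠ δ in 𝓝[>] (0 : ℝ), ∀ᵐ x ∂μ.restrict s, ‖F δ x‖ ≤ (2 * ‖g x‖ + 1) ^ 2 :=
    mem_of_superset (Ioo_mem_nhdsGT one_pos) fun δ hδ => ae_of_all _ fun x => by
      rw [Real.norm_of_nonneg (by positivity)]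
      gcongr ?_ ^ 2
      linarith [norm_regularizedNormRatio_smul_sub_le (x := f x) (y := g x) hδ.1, hδ.2]
  have hbound : IntegrableOn (fun x => (2 * ‖g x‖ + 1) ^ 2) s μ :=
    ((continuous_const.mul hg.norm).add continuous_const).pow 2 |>.continuousOn
      |>.integrableOn_compact hs
  have hlim : ∀ x, Tendsto (F · x) (𝓝[>] 0) (𝓝 0) := fun x => by
    simpa using ((tendsto_regularizedNormRatio_smul_sub (hfg x) (hzero x)).mono_left
      nhdsWithin_le_nhds).norm.pow 2
  simpa using tendsto_integral_filter_of_dominated_convergence _ hmeas hdom hbound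
    (ae_of_all _ hlim)

end Integral

theorem cgl_same_argument_multiplicative_approximation_general (d : ℕ)
    (ψ₀ ψ₁ : (Fin d → ℝ) → ℂ) (hψ₀ : Continuous ψ₀) (hψ₁ : Continuous ψ₁)
    (hper₀ : ∀ x : Fin d → ℝ, ∀ i : Fin d, ψ₀ (x + Pi.single i (2 * Real.pi)) = ψ₀ x)
    (hper₁ : ∀ x : Fin d → ℝ, ∀ i : Fin d, ψ₁ (x + Pi.single i (2 * Real.pi)) = ψ₁ x)
    (hzero : {x : Fin d → ℝ | ψ₀ x = 0} = {x : Fin d → ℝ | ψ₁ x = 0})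
    (harg : ∀ x : Fin d → ℝ, ψ₀ x ≠ 0 → ∃ r : ℝ, 0 < r ∧ ψ₁ x = (r : ℂ) * ψ₀ x)
    (ε : ℝ) (hε : 0 < ε) :
    ∃ φ : (Fin d → ℝ) → ℝ, Continuous φ ∧
      (∀ x : Fin d → ℝ, ∀ i : Fin d, φ (x + Pi.single i (2 * Real.pi)) = φ x) ∧
      (∫ x in Set.univ.pi fun _ : Fin d => Set.Icc (0 : ℝ) (2 * Real.pi),
          ‖Complex.exp ((φ x : ℂ)) * ψ₀ x - ψ₁ x‖ ^ 2) ^ ((1 : ℝ) / 2) < ε := by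
  have hsameRay x : SameRay ℝ (ψ₀ x) (ψ₁ x) := by
    rcases eq_or_ne (ψ₀ x) 0 with h | h
    · exact h ▸ SameRay.zero_left _
    · obtain ⟨r, hr, hψ⟩ := harg x h
      exact hψ ▸ Complex.real_smul ▸ sameRay_smul_right_iff.mpr (.inl hr.le)
  have hvanish x (hx : ψ₀ x = 0) : ψ₁ x = 0 := (Set.ext_iff.mp hzero x).mp hx
  obtain ⟨δ, hsmall, hδ⟩ := ((tendsto_setIntegral_norm_regularizedNormRatio_smul_sub_sq
      (μ := volume) (isCompact_univ_pi fun _ => isCompact_Icc) hψ₀ hψ₁ hsameRay hvanish).eventually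
      (gt_mem_nhds (pow_pos hε 2))).and self_mem_nhdsWithin |>.exists
  refine ⟨fun x => Real.log (regularizedNormRatio δ (ψ₀ x) (ψ₁ x)),
    (hψ₀.regularizedNormRatio hψ₁ hδ).log fun x => (regularizedNormRatio_pos hδ).ne',
    fun x i => by simp only [hper₀ x i, hper₁ x i], ?_⟩
  have hexp x : Complex.exp (Real.log (regularizedNormRatio δ (ψ₀ x) (ψ₁ x)) : ℂ) * ψ₀ x
      = regularizedNormRatio δ (ψ₀ x) (ψ₁ x) • ψ₀ x := by
    rw [← Complex.ofReal_exp, Real.exp_log (regularizedNormRatio_pos hδ), Complex.real_smul]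
  simp only [hexp]
  rw [← Real.sqrt_eq_rpow, Real.sqrt_lt' hε]
  exact hsmall

/-- if `ψ₀, ψ₁ : ℝ^d → ℂ` are continuous, `2π`-periodic in each coordinate,
have the same zero set, and `ψ₁/ψ₀ > 0` off the zero set (same argument), then for every
`ε > 0` there is a continuous `2π`-periodic function `φ : ℝ^d → ℝ` with
`(∫_{[0,2π]^d} |e^{φ} ψ₀ − ψ₁|²)^{1/2} < ε`. -/
theorem cgl_same_argument_multiplicative_approximation (d : ℕ) (hd : 1 ≤ d)
    (ψ₀ ψ₁ : (Fin d → ℝ) → ℂ) (hψ₀ : Continuous ψ₀) (hψ₁ : Continuous ψ₁)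
    (hper₀ : ∀ x : Fin d → ℝ, ∀ i : Fin d, ψ₀ (x + Pi.single i (2 * Real.pi)) = ψ₀ x)
    (hper₁ : ∀ x : Fin d → ℝ, ∀ i : Fin d, ψ₁ (x + Pi.single i (2 * Real.pi)) = ψ₁ x)
    (hzero : {x : Fin d → ℝ | ψ₀ x = 0} = {x : Fin d → ℝ | ψ₁ x = 0})
    (harg : ∀ x : Fin d → ℝ, ψ₀ x ≠ 0 → ∃ r : ℝ, 0 < r ∧ ψ₁ x = (r : ℂ) * ψ₀ x)
    (ε : ℝ) (hε : 0 < ε) :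
    ∃ φ : (Fin d → ℝ) → ℝ, Continuous φ ∧
      (∀ x : Fin d → ℝ, ∀ i : Fin d, φ (x + Pi.single i (2 * Real.pi)) = φ x) ∧
      (∫ x in Set.univ.pi fun _ : Fin d => Set.Icc (0 : ℝ) (2 * Real.pi),
          ‖Complex.exp ((φ x : ℂ)) * ψ₀ x - ψ₁ x‖ ^ 2) ^ ((1 : ℝ) / 2) < ε :=
  cgl_same_argument_multiplicative_approximation_general d ψ₀ ψ₁ hψ₀ hψ₁ hper₀ hper₁ hzero harg ε hε
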